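/- Let δ ∈ ℤ[X] be irreducible in ℤ[X], with nonzero constant coefficient (δ.coeff 0 ≠ 0) and with δ(1) ≠ 0. Suppose there exists α ∈ ℂ with |α| = 1 such that α is a root of δ (the evaluation of δ at α under the algebra map ℤ[X] → ℂ is zero). Then δ is self-reciprocal: δ.reverse = δ. -/

import Mathlib

/-!
Since `δ` has real coefficients and `|α| = 1`, also `α⁻¹ = conj α` is a root of `δ`, i.e. `α` is a
root of `δ.reverse`. As `δ` is irreducible, Gauss's lemma gives `δ ∣ δ.reverse`; the reverse has no
larger degree, so `δ.reverse = c • δ` for a constant `c`, and evaluating at `1` forces `c = 1`.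
-/

open Polynomial

namespace Polynomial

theorem eval_one_reverse {R : Type*} [CommSemiring R] (p : R[X]) :
    p.reverse.eval 1 = p.eval 1 := by
  let : Invertible (1 : R) := invertibleOne
  simpa using eval₂_reverse_mul_pow (RingHom.id R) (1 : R) p

theorem aeval_reverse_eq_zero_iff {R K : Type*} [CommSemiring R] [Field K] [Algebra R K]
    {x : K} (hx : x ≠ 0) (p : R[X]) : aeval x p.reverse = 0 ↔ aeval x⁻¹ p = 0 := by
  let : Invertible x⁻¹ := invertibleOfNonzero (inv_ne_zero hx)
  simpa [aeval_def] using eval₂_reverse_eq_zero_iff (algebraMap R K) x⁻¹ p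

theorem aeval_conj_int (p : ℤ[X]) (z : ℂ) :
    aeval (starRingEnd ℂ z) p = starRingEnd ℂ (aeval z p) :=
  aeval_algHom_apply (starRingEnd ℂ).toIntAlgHom z p

theorem aeval_reverse_eq_zero_of_norm_eq_one {p : ℤ[X]} {z : ℂ} (hz : ‖z‖ = 1)
    (hpz : aeval z p = 0) : aeval z p.reverse = 0 := by
  have hz0 : z ≠ 0 := by rintro rfl; simp at hz
  rw [aeval_reverse_eq_zero_iff hz0, Complex.inv_eq_conj hz, aeval_conj_int, hpz, map_zero]

/-- By Gauss's lemma `p` stays irreducible over `K`, where it is then associated to the minimal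
polynomial of `x`. -/
theorem _root_.Irreducible.dvd_of_aeval_eq_zero {R : Type*} (K : Type*) {L : Type*} [CommRing R]
    [IsDomain R] [IsGCDMonoid R] [Field K] [Algebra R K] [IsFractionRing R K] [Field L]
    [Algebra R L] [Algebra K L] [IsScalarTower R K L] {p q : R[X]} (hp : Irreducible p) {x : L}
    (hpx : aeval x p = 0) (hqx : aeval x q = 0) : p ∣ q := by
  have hinj : Function.Injective (algebraMap R L) := by
    rw [IsScalarTower.algebraMap_eq R K L]
    exact (algebraMap K L).injective.comp (IsFractionRing.injective R K)
  have hdeg : p.natDegree ≠ 0 := by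
    intro h
    rw [eq_C_of_natDegree_eq_zero h, aeval_C, map_eq_zero_iff _ hinj] at hpx
    exact hp.ne_zero (by rw [eq_C_of_natDegree_eq_zero h, hpx, C_0])
  have hprim := hp.isPrimitive hdeg
  have hirrK := (hprim.irreducible_iff_irreducible_map_fraction_map (K := K)).mp hp
  rw [hprim.dvd_iff_fraction_map_dvd_fraction_map K,
    ← hirrK.dvd_iff_aeval_eq_zero (b := x) (by rwa [aeval_map_algebraMap]),
    aeval_map_algebraMap]
  exact hqx

theorem eq_of_dvd_of_natDegree_le_of_eval_eq {R : Type*} [CommRing R] [IsDomain R]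
    {p q : R[X]} {x : R} (hpq : p ∣ q) (hdeg : q.natDegree ≤ p.natDegree) (hpx : p.eval x ≠ 0)
    (heval : q.eval x = p.eval x) : q = p := by
  obtain ⟨c, rfl⟩ := hpq
  have hp0 : p ≠ 0 := by rintro rfl; simp at hpx
  have hc0 : c ≠ 0 := by rintro rfl; exact hpx (by simpa using heval.symm)
  have hc : c = C (c.coeff 0) := by
    rw [natDegree_mul hp0 hc0] at hdeg
    exact eq_C_of_natDegree_eq_zero (by omega)
  rw [hc, eval_mul, eval_C] at heval
  rw [hc, (mul_eq_left₀ hpx).mp heval, C_1, mul_one]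

end Polynomial

theorem irreducible_with_unit_circle_root_is_selfReciprocal_general
    (δ : Polynomial ℤ) (hirr : Irreducible δ)
    (h1 : δ.eval 1 ≠ 0)
    (α : ℂ) (hα : ‖α‖ = 1) (hroot : Polynomial.aeval α δ = 0) :
    δ.reverse = δ :=
  eq_of_dvd_of_natDegree_le_of_eval_eq
    (hirr.dvd_of_aeval_eq_zero ℚ hroot (aeval_reverse_eq_zero_of_norm_eq_one hα hroot))
    δ.reverse_natDegree_le h1 δ.eval_one_reverse

/-- An irreducible integer polynomial with nonzero constant coefficient, not vanishing at 1,
that has a root on the unit circle, is self-reciprocal. -/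
theorem irreducible_with_unit_circle_root_is_selfReciprocal
    (δ : Polynomial ℤ) (hirr : Irreducible δ) (h0 : δ.coeff 0 ≠ 0)
    (h1 : δ.eval 1 ≠ 0)
    (α : ℂ) (hα : ‖α‖ = 1) (hroot : Polynomial.aeval α δ = 0) :
    δ.reverse = δ :=
  irreducible_with_unit_circle_root_is_selfReciprocal_general δ hirr h1 α hα hroot
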